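/- arXiv:1405.1902 — 2 statements merged into one kernel-verified Lean document; each statement's English description precedes it below -/
import Mathlib

section
/- Let Φ : (ℝⁿ)^{m+1} × (ℝⁿ)^{m+1} → ℝ be an arbitrary function and define 𝓔(u) = E(u) + Φ(u(t₀),…,u(t_m), u̇(t₀),…,u̇(t_m)) on the admissible class 𝒜. Let u minimize 𝓔 over 𝒜 and let t_k (0 < k < m) be an interior node such that Φ does not depend on its argument u̇(t_k). Then u is twice differentiable at t_k: the second derivative of u at t_k computed from the left interval [t_{k−1}, t_k] equals the one computed from the right interval [t_k, t_{k+1}]. -/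
open Matrix Set
open MeasureTheory Filter

/-- The force residual `F(t) = M ü(t) + D u̇(t) + K u(t) + g` of a trajectory `w`. -/
noncomputable def forceResidual {n : ℕ} (M D K : Matrix (Fin n) (Fin n) ℝ) (g : Fin n → ℝ)
    (w : ℝ → Fin n → ℝ) (s : ℝ) : Fin n → ℝ :=
  M.mulVec (deriv (deriv w) s) + D.mulVec (deriv w s) + K.mulVec (w s) + g

/-- The elastic (spacetime) energy
`E(w) = (1/2) ∫_{t₀}^{t_m} ‖M ẅ + D ẇ + K w + g‖²_{M⁻¹} dt`. -/
noncomputable def elasticEnergy {n : ℕ} (M D K : Matrix (Fin n) (Fin n) ℝ) (g : Fin n → ℝ)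
    (t0 tm : ℝ) (w : ℝ → Fin n → ℝ) : ℝ :=
  (1/2) * ∫ s in t0..tm,
    (forceResidual M D K g w s) ⬝ᵥ (M⁻¹.mulVec (forceResidual M D K g w s))

/-- The least-squares constraint energy
`E_C(w) = (1/2) ∑_{k=0}^{m} (c_A ‖A_k w(t_k) − a_k‖² + c_B ‖B_k ẇ(t_k) − b_k‖²)`,
where the velocity is the derivative within `[t₀, t_m]`. -/
noncomputable def constraintEnergy {n : ℕ} (m : ℕ) (t : ℕ → ℝ) (p q : ℕ → ℕ)
    (A : (k : ℕ) → Matrix (Fin (p k)) (Fin n) ℝ)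
    (B : (k : ℕ) → Matrix (Fin (q k)) (Fin n) ℝ)
    (a : (k : ℕ) → Fin (p k) → ℝ) (b : (k : ℕ) → Fin (q k) → ℝ)
    (cA cB : ℝ) (w : ℝ → Fin n → ℝ) : ℝ :=
  (1/2) * ∑ k ∈ Finset.range (m+1),
    (cA * (((A k).mulVec (w (t k)) - a k) ⬝ᵥ ((A k).mulVec (w (t k)) - a k))
      + cB * (((B k).mulVec (derivWithin w (Icc (t 0) (t m)) (t k)) - b k) ⬝ᵥ
              ((B k).mulVec (derivWithin w (Icc (t 0) (t m)) (t k)) - b k)))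

/-- The admissible class `𝒜`: functions that are `C¹` on `[t₀, t_m]` and `C⁴` on each
subinterval `[t_{k−1}, t_k]`, `k = 1, …, m`. -/
def Admissible {n : ℕ} (m : ℕ) (t : ℕ → ℝ) (w : ℝ → Fin n → ℝ) : Prop :=
  ContDiffOn ℝ 1 w (Icc (t 0) (t m)) ∧
  ∀ k, 1 ≤ k → k ≤ m → ContDiffOn ℝ 4 w (Icc (t (k-1)) (t k))

section Aux

/-- locate a non-node point in some open subinterval -/
lemma aux_find_interval (t : ℕ → ℝ) :
    ∀ N : ℕ, (∀ j < N, t j < t (j+1)) → ∀ s : ℝ, t 0 < s → s < t N →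
      (∀ j ≤ N, s ≠ t j) → ∃ j < N, t j < s ∧ s < t (j+1) := by
  intro N
  induction N with
  | zero => intro _ s h1 h2 _; exact absurd (h1.trans h2) (lt_irrefl _)
  | succ N ih =>
    intro hmono s h1 h2 hne
    by_cases hs : s < t N
    · obtain ⟨j, hj, h⟩ := ih (fun j hj => hmono j (hj.trans (Nat.lt_succ_self N))) s h1 hs
        (fun j hj => hne j (hj.trans (Nat.le_succ N)))
      exact ⟨j, hj.trans (Nat.lt_succ_self N), h⟩
    · refine ⟨N, Nat.lt_succ_self N, ?_, h2⟩
      rcases lt_or_eq_of_le (not_lt.mp hs) with h | h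
      · exact h
      · exact absurd h.symm (hne N (Nat.le_succ N))

/-- monotonicity of nodes -/
lemma aux_mono (t : ℕ → ℝ) (N : ℕ) (ht : ∀ j < N, t j < t (j+1)) :
    ∀ i j, i ≤ j → j ≤ N → t i ≤ t j := by
  intro i j hij hjN
  induction j with
  | zero => simp_all
  | succ j ih =>
    rcases Nat.eq_or_lt_of_le hij with h | h
    · simp [h]
    · exact (ih (Nat.lt_succ_iff.mp h) ((Nat.le_succ j).trans hjN)).trans
        (ht j (lt_of_lt_of_le (Nat.lt_succ_self j) hjN)).le

/-- dot product bound via sup norms -/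
lemma aux_dot_bound {n : ℕ} (x y : Fin n → ℝ) : |x ⬝ᵥ y| ≤ n * (‖x‖ * ‖y‖) := by
  have h : |x ⬝ᵥ y| ≤ ∑ i : Fin n, |x i * y i| := Finset.abs_sum_le_sum_abs _ _
  refine h.trans ?_
  have : ∀ i : Fin n, |x i * y i| ≤ ‖x‖ * ‖y‖ := by
    intro i
    rw [abs_mul]
    exact mul_le_mul (norm_le_pi_norm x i) (norm_le_pi_norm y i) (abs_nonneg _) (norm_nonneg _)
  calc ∑ i : Fin n, |x i * y i| ≤ ∑ _i : Fin n, ‖x‖ * ‖y‖ := Finset.sum_le_sum (fun i _ => this i)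
    _ = n * (‖x‖ * ‖y‖) := by simp [mul_comm]

/-- symmetric matrix dot-swap -/
lemma aux_dot_symm {n : ℕ} {A : Matrix (Fin n) (Fin n) ℝ} (hA : Aᵀ = A) (x y : Fin n → ℝ) :
    x ⬝ᵥ A.mulVec y = y ⬝ᵥ A.mulVec x := by
  rw [Matrix.dotProduct_mulVec, ← hA, Matrix.vecMul_transpose, dotProduct_comm, hA]

/-- derivative of a dot product with a constant vector -/
lemma aux_dot_hasDeriv {n : ℕ} {f : ℝ → Fin n → ℝ} {f' : Fin n → ℝ} {s : ℝ} (e : Fin n → ℝ)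
    (hf : HasDerivAt f f' s) : HasDerivAt (fun x => f x ⬝ᵥ e) (f' ⬝ᵥ e) s := by
  have h : ∀ i ∈ Finset.univ, HasDerivAt (fun x => f x i * e i) (f' i * e i) s :=
    fun i _ => ((hasDerivAt_pi.mp hf) i).mul_const (e i)
  simpa [dotProduct] using HasDerivAt.fun_sum h

/-- continuity of mulVec composed with a continuous map -/
lemma aux_mulVec_contOn {n : ℕ} {A : Matrix (Fin n) (Fin n) ℝ} {f : ℝ → Fin n → ℝ} {s : Set ℝ}
    (hf : ContinuousOn f s) : ContinuousOn (fun x => A.mulVec (f x)) s :=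
  (LinearMap.toContinuousLinearMap A.mulVecLin).continuous.comp_continuousOn hf

/-- continuity of a dot product -/
lemma aux_dot_contOn {n : ℕ} {f g : ℝ → Fin n → ℝ} {s : Set ℝ}
    (hf : ContinuousOn f s) (hg : ContinuousOn g s) :
    ContinuousOn (fun x => f x ⬝ᵥ g x) s := by
  apply continuousOn_finset_sum
  intro i _
  exact (((continuous_apply i).comp_continuousOn hf)).mul
    (((continuous_apply i).comp_continuousOn hg))

lemma aux_bump : ∃ C : ℝ, 0 ≤ C ∧ ∀ b δ : ℝ, 0 < δ → ∃ ψ : ℝ → ℝ,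
    ContDiff ℝ (⊤ : ℕ∞) ψ ∧ ψ b = 0 ∧ deriv ψ b = 1 ∧
    (∀ s, δ ≤ |s - b| → ψ s = 0) ∧
    (∀ s, |ψ s| ≤ δ) ∧ (∀ s, |deriv ψ s| ≤ C) := by
  set η : ContDiffBump (0 : ℝ) := ⟨1, 2, one_pos, one_lt_two⟩ with hη
  have hηsm : ContDiff ℝ (⊤ : ℕ∞) η := η.contDiff
  have hηd : Continuous (deriv (η : ℝ → ℝ)) := (hηsm.iterate_deriv 1).continuous
  obtain ⟨B, hB⟩ := η.hasCompactSupport.deriv.exists_bound_of_continuous hηd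
  have hB0 : 0 ≤ B := le_trans (norm_nonneg _) (hB 0)
  refine ⟨1 + 2 * B, by linarith, ?_⟩
  intro b δ hδ
  set ψ : ℝ → ℝ := fun s => (s - b) * η ((s - b) / (δ / 2)) with hψdef
  have hδ2 : (0:ℝ) < δ / 2 := by linarith
  have hsm : ContDiff ℝ (⊤ : ℕ∞) ψ := by
    exact (contDiff_id.sub contDiff_const).mul
      (hηsm.comp ((contDiff_id.sub contDiff_const).div_const (δ / 2)))
  have hder : ∀ s : ℝ, HasDerivAt ψ
      (η ((s - b) / (δ / 2)) + ((s - b) / (δ / 2)) * deriv (η : ℝ → ℝ) ((s - b) / (δ / 2))) s := by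
    intro s
    have h1 : HasDerivAt (fun s : ℝ => s - b) 1 s := (hasDerivAt_id s).sub_const b
    have h2 : HasDerivAt (fun s : ℝ => (s - b) / (δ / 2)) (1 / (δ / 2)) s := h1.div_const _
    have h3 : HasDerivAt (η : ℝ → ℝ) (deriv (η : ℝ → ℝ) ((s - b) / (δ / 2)))
        ((s - b) / (δ / 2)) :=
      ((hηsm.differentiable (by simp)) _).hasDerivAt
    have h4 := HasDerivAt.comp s h3 h2
    have h5 := h1.mul h4
    refine h5.congr_deriv ?_
    show 1 * η ((s - b) / (δ / 2)) + (s - b) * (deriv (η : ℝ → ℝ) ((s - b) / (δ / 2)) * (1 / (δ / 2))) = _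
    ring
  have hzero : ∀ s : ℝ, δ ≤ |s - b| → η ((s - b) / (δ / 2)) = 0 := by
    intro s hs
    apply η.zero_of_le_dist
    have : dist ((s - b) / (δ / 2)) 0 = |s - b| / (δ / 2) := by
      rw [Real.dist_eq, sub_zero, abs_div, abs_of_pos hδ2]
    rw [this]
    show (2:ℝ) ≤ _
    rw [le_div_iff₀ hδ2]
    linarith
  refine ⟨ψ, hsm, by simp [hψdef], ?_, ?_, ?_, ?_⟩
  · rw [(hder b).deriv]
    simp [η.one_of_mem_closedBall (by simp : (0:ℝ) ∈ Metric.closedBall (0:ℝ) (1:ℝ))]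
  · intro s hs; simp [hψdef, hzero s hs]
  · intro s
    by_cases hs : δ ≤ |s - b|
    · simp [hψdef, hzero s hs, hδ.le]
    · push_neg at hs
      rw [hψdef]
      calc |(s - b) * η ((s - b) / (δ / 2))| = |s - b| * |η ((s - b) / (δ / 2))| := abs_mul _ _
        _ ≤ δ * 1 := by
            apply mul_le_mul hs.le _ (abs_nonneg _) hδ.le
            rw [abs_of_nonneg (η.nonneg)]
            exact η.le_one
        _ = δ := mul_one δ
  · intro s
    rw [(hder s).deriv]
    set x := (s - b) / (δ / 2) with hx
    have hη1 : |η x| ≤ 1 := by rw [abs_of_nonneg (η.nonneg)]; exact η.le_one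
    have key : |x * deriv (η : ℝ → ℝ) x| ≤ 2 * B := by
      by_cases hxx : |x| ≤ 2
      · rw [abs_mul]
        exact mul_le_mul hxx (hB x) (abs_nonneg _) (by norm_num)
      · push_neg at hxx
        have : deriv (η : ℝ → ℝ) x = 0 := by
          have hxs : x ∉ tsupport (η : ℝ → ℝ) := by
            rw [η.tsupport_eq]
            simp only [Metric.mem_closedBall, Real.dist_eq, sub_zero, not_le]
            exact hxx
          by_contra h
          exact hxs (support_deriv_subset (by simpa using h))
        rw [this, mul_zero, abs_zero]
        positivity
    calc |η x + x * deriv (η : ℝ → ℝ) x| ≤ |η x| + |x * deriv (η : ℝ → ℝ) x| := abs_add_le _ _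
      _ ≤ 1 + 2 * B := add_le_add hη1 key

lemma aux_side {n : ℕ} (M D K : Matrix (Fin n) (Fin n) ℝ) (g : Fin n → ℝ)
    (u : ℝ → Fin n → ℝ) (c d : ℝ) (hcd : c < d) (h4 : ContDiffOn ℝ 4 u (Icc c d)) :
    ContinuousOn (fun s => M.mulVec (derivWithin (derivWithin u (Icc c d)) (Icc c d) s)
        + D.mulVec (derivWithin u (Icc c d) s) + K.mulVec (u s) + g) (Icc c d) ∧
    (∀ s ∈ Icc c d, HasDerivWithinAt
        (fun s => M.mulVec (derivWithin (derivWithin u (Icc c d)) (Icc c d) s)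
          + D.mulVec (derivWithin u (Icc c d) s) + K.mulVec (u s) + g)
        (M.mulVec (derivWithin (derivWithin (derivWithin u (Icc c d)) (Icc c d)) (Icc c d) s)
          + D.mulVec (derivWithin (derivWithin u (Icc c d)) (Icc c d) s)
          + K.mulVec (derivWithin u (Icc c d) s)) (Icc c d) s) ∧
    ContinuousOn (fun s =>
        M.mulVec (derivWithin (derivWithin (derivWithin u (Icc c d)) (Icc c d)) (Icc c d) s)
          + D.mulVec (derivWithin (derivWithin u (Icc c d)) (Icc c d) s)
          + K.mulVec (derivWithin u (Icc c d) s)) (Icc c d) ∧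
    (∀ s ∈ Ioo c d, deriv u s = derivWithin u (Icc c d) s ∧
        deriv (deriv u) s = derivWithin (derivWithin u (Icc c d)) (Icc c d) s ∧
        HasDerivAt (deriv u) (derivWithin (derivWithin u (Icc c d)) (Icc c d) s) s ∧
        DifferentiableAt ℝ u s) := by
  have ud : UniqueDiffOn ℝ (Icc c d) := uniqueDiffOn_Icc hcd
  set u1 := derivWithin u (Icc c d) with hu1def
  set u2 := derivWithin u1 (Icc c d) with hu2def
  set u3 := derivWithin u2 (Icc c d) with hu3def
  have h3 : ContDiffOn ℝ 3 u1 (Icc c d) := h4.derivWithin ud (by norm_num)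
  have h2 : ContDiffOn ℝ 2 u2 (Icc c d) := h3.derivWithin ud (by norm_num)
  have h1 : ContDiffOn ℝ 1 u3 (Icc c d) := h2.derivWithin ud (by norm_num)
  have hu_d : ∀ s ∈ Icc c d, HasDerivWithinAt u (u1 s) (Icc c d) s :=
    fun s hs => ((h4.differentiableOn (by norm_num)) s hs).hasDerivWithinAt
  have hu1_d : ∀ s ∈ Icc c d, HasDerivWithinAt u1 (u2 s) (Icc c d) s :=
    fun s hs => ((h3.differentiableOn (by norm_num)) s hs).hasDerivWithinAt
  have hu2_d : ∀ s ∈ Icc c d, HasDerivWithinAt u2 (u3 s) (Icc c d) s :=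
    fun s hs => ((h2.differentiableOn (by norm_num)) s hs).hasDerivWithinAt
  set LM := LinearMap.toContinuousLinearMap (M.mulVecLin) with hLM
  set LD := LinearMap.toContinuousLinearMap (D.mulVecLin) with hLD
  set LK := LinearMap.toContinuousLinearMap (K.mulVecLin) with hLK
  have hLMa : ∀ x, LM x = M.mulVec x := fun x => rfl
  have hLDa : ∀ x, LD x = D.mulVec x := fun x => rfl
  have hLKa : ∀ x, LK x = K.mulVec x := fun x => rfl
  refine ⟨?_, ?_, ?_, ?_⟩
  · apply ContinuousOn.add
    apply ContinuousOn.add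
    apply ContinuousOn.add
    · exact LM.continuous.comp_continuousOn (h2.continuousOn)
    · exact LD.continuous.comp_continuousOn (h3.continuousOn)
    · exact LK.continuous.comp_continuousOn (h4.continuousOn)
    · exact continuousOn_const
  · intro s hs
    have hA := (LM.hasFDerivAt (x := u2 s)).comp_hasDerivWithinAt s (hu2_d s hs)
    have hB := (LD.hasFDerivAt (x := u1 s)).comp_hasDerivWithinAt s (hu1_d s hs)
    have hC := (LK.hasFDerivAt (x := u s)).comp_hasDerivWithinAt s (hu_d s hs)
    have := ((hA.add hB).add hC).add_const g
    simpa [Function.comp, hLMa, hLDa, hLKa] using this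
  · apply ContinuousOn.add
    apply ContinuousOn.add
    · exact LM.continuous.comp_continuousOn (h1.continuousOn)
    · exact LD.continuous.comp_continuousOn (h2.continuousOn)
    · exact LK.continuous.comp_continuousOn (h3.continuousOn)
  · intro s hs
    have hn : Icc c d ∈ nhds s := Icc_mem_nhds hs.1 hs.2
    have e1 : deriv u s = u1 s := (derivWithin_of_mem_nhds hn).symm
    have hev : u1 =ᶠ[nhds s] deriv u :=
      Filter.eventuallyEq_of_mem (Ioo_mem_nhds hs.1 hs.2)
        (fun x hx => derivWithin_of_mem_nhds (Icc_mem_nhds hx.1 hx.2))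
    have hu1at : DifferentiableAt ℝ u1 s :=
      (((h3 s (mem_of_mem_nhds hn)).contDiffAt hn).differentiableAt (by norm_num))
    have hd1 : HasDerivAt u1 (u2 s) s := by
      have := hu1at.hasDerivAt
      rwa [← derivWithin_of_mem_nhds hn (f := u1)] at this
    have H1 : HasDerivAt (deriv u) (u2 s) s := hd1.congr_of_eventuallyEq hev.symm
    exact ⟨e1, H1.deriv.symm ▸ rfl, H1,
      ((h4 s (mem_of_mem_nhds hn)).contDiffAt hn).differentiableAt (by norm_num)⟩

lemma aux_ae_restrict_of_Ioo {f g : ℝ → ℝ} {c d : ℝ}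
    (hfg : ∀ s ∈ Ioo c d, f s = g s) : ∀ᵐ x ∂(volume.restrict (Ioc c d)), f x = g x := by
  have h1 : ∀ᵐ x : ℝ ∂volume, x ∉ ({d} : Set ℝ) :=
    measure_eq_zero_iff_ae_notMem.mp (measure_singleton d)
  filter_upwards [ae_restrict_mem measurableSet_Ioc, ae_restrict_of_ae h1] with x hx hxd
  exact hfg x ⟨hx.1, lt_of_le_of_ne hx.2 (by simpa using hxd)⟩

lemma aux_integrable_congr {f g : ℝ → ℝ} {c d : ℝ} (hcd : c ≤ d)
    (hg : IntervalIntegrable g volume c d) (hfg : ∀ s ∈ Ioo c d, f s = g s) :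
    IntervalIntegrable f volume c d := by
  rw [intervalIntegrable_iff_integrableOn_Ioc_of_le hcd] at hg ⊢
  exact hg.congr_fun_ae (Filter.EventuallyEq.symm (aux_ae_restrict_of_Ioo hfg))

lemma aux_integral_congr {f g : ℝ → ℝ} {c d : ℝ} (hcd : c ≤ d)
    (hfg : ∀ s ∈ Ioo c d, f s = g s) : ∫ s in c..d, f s = ∫ s in c..d, g s := by
  apply intervalIntegral.integral_congr_ae
  have := aux_ae_restrict_of_Ioo hfg
  rw [MeasureTheory.ae_restrict_iff' measurableSet_Ioc] at this
  filter_upwards [this] with x hx hxm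
  exact hx (by rwa [Set.uIoc_of_le hcd] at hxm)

lemma aux_zero_of_quadratic (A B : ℝ) (h : ∀ r : ℝ, 0 ≤ r * A + r^2 * B) : A = 0 := by
  by_contra hA
  have hA2 : 0 < A^2 := by positivity
  have hB1 : 0 < |B| + 1 := by positivity
  have hc : (0:ℝ) < 1 / (|B| + 1) := by positivity
  have hcB : (1 / (|B| + 1)) * B < 1 := by
    rw [div_mul_eq_mul_div, one_mul, div_lt_one hB1]
    cases abs_cases B with
    | inl h => linarith [h.1]
    | inr h => linarith [h.1]
  have := h (-(1 / (|B| + 1) * A))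
  nlinarith [this, mul_pos hc hA2]

lemma aux_eq_zero_of_le_lin (X C δ0 : ℝ) (hδ0 : 0 < δ0)
    (h : ∀ δ : ℝ, 0 < δ → δ < δ0 → |X| ≤ δ * C) : X = 0 := by
  have hC0 : 0 ≤ C := by
    have := h (δ0/2) (by linarith) (by linarith)
    nlinarith [abs_nonneg X]
  by_contra hX
  have hX0 : 0 < |X| := abs_pos.mpr hX
  set δ := min (δ0/2) (|X|/(2*(C+1))) with hδ
  have hδpos : 0 < δ := lt_min (by linarith) (by positivity)
  have hδlt : δ < δ0 := lt_of_le_of_lt (min_le_left _ _) (by linarith)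
  have h2 : δ * C ≤ (|X|/(2*(C+1))) * C :=
    mul_le_mul_of_nonneg_right (min_le_right _ _) hC0
  have h3 : (|X|/(2*(C+1))) * C < |X| := by
    rw [div_mul_eq_mul_div, div_lt_iff₀ (by linarith)]
    nlinarith
  exact absurd (h δ hδpos hδlt) (by linarith)

lemma aux_ae_nodes (m : ℕ) (t : ℕ → ℝ) :
    ∀ᵐ x : ℝ ∂(volume : Measure ℝ), ∀ j ≤ m, x ≠ t j := by
  have hfin : Set.Finite (t '' {j | j ≤ m}) := (Set.finite_Iic m).image t
  have h0 : (volume : Measure ℝ) (t '' {j | j ≤ m}) = 0 := hfin.measure_zero _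
  filter_upwards [measure_eq_zero_iff_ae_notMem.mp h0] with x hx j hj hxe
  exact hx ⟨j, hj, hxe.symm⟩

end Aux

set_option maxHeartbeats 3200000 in
/-- If `u` minimizes `E(u) + Φ(u(t₀),…,u(t_m), u̇(t₀),…,u̇(t_m))` over the
admissible class and `Φ` does not depend on its velocity argument at an interior node `t_k`
(`0 < k < m`), then `u` is twice differentiable at `t_k`: the one-sided second derivatives
computed from `[t_{k−1}, t_k]` and from `[t_k, t_{k+1}]` agree. -/
theorem minimizer_twice_differentiable_at_velocity_free_node
    (n m : ℕ) (hn : 0 < n) (hm : 0 < m)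
    (M K : Matrix (Fin n) (Fin n) ℝ) (hMsymm : M.IsSymm) (hKsymm : K.IsSymm)
    (hMpd : M.PosDef)
    (α β : ℝ) (D : Matrix (Fin n) (Fin n) ℝ) (hD : D = α • M + β • K)
    (g : Fin n → ℝ)
    (t : ℕ → ℝ) (ht : ∀ k < m, t k < t (k+1))
    (Φ : (Fin (m+1) → Fin n → ℝ) → (Fin (m+1) → Fin n → ℝ) → ℝ)
    (u : ℝ → Fin n → ℝ) (hu : Admissible m t u)
    (hmin : ∀ w : ℝ → Fin n → ℝ, Admissible m t w →
      elasticEnergy M D K g (t 0) (t m) u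
          + Φ (fun k => u (t k)) (fun k => derivWithin u (Icc (t 0) (t m)) (t k)) ≤
      elasticEnergy M D K g (t 0) (t m) w
          + Φ (fun k => w (t k)) (fun k => derivWithin w (Icc (t 0) (t m)) (t k)))
    (k : ℕ) (hk0 : 0 < k) (hkm : k < m)
    (hΦ : ∀ (U V V' : Fin (m+1) → Fin n → ℝ),
      (∀ j : Fin (m+1), (j : ℕ) ≠ k → V j = V' j) → Φ U V = Φ U V') :
    iteratedDerivWithin 2 u (Icc (t (k-1)) (t k)) (t k) =
    iteratedDerivWithin 2 u (Icc (t k) (t (k+1))) (t k) := by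
  have hkm1 : k - 1 + 1 = k := Nat.succ_pred_eq_of_pos hk0
  have hab : t (k-1) < t k := by
    have := ht (k-1) (by omega); rwa [hkm1] at this
  have hbc : t k < t (k+1) := ht k hkm
  have ht0a : t 0 ≤ t (k-1) := aux_mono t m ht 0 (k-1) (by omega) (by omega)
  have hcctm : t (k+1) ≤ t m := aux_mono t m ht (k+1) m (by omega) le_rfl
  have ht0b : t 0 < t k := lt_of_le_of_lt ht0a hab
  have hbtm : t k < t m := lt_of_lt_of_le hbc hcctm
  have ht0tm : t 0 < t m := ht0b.trans hbtm
  have hTud : UniqueDiffOn ℝ (Icc (t 0) (t m)) := uniqueDiffOn_Icc ht0tm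
  have h4L : ContDiffOn ℝ 4 u (Icc (t (k-1)) (t k)) := hu.2 k hk0 hkm.le
  have h4R : ContDiffOn ℝ 4 u (Icc (t k) (t (k+1))) := by
    have := hu.2 (k+1) (by omega) (by omega)
    rwa [Nat.add_sub_cancel] at this
  -- abbreviations for one-sided data
  set a := t (k-1) with ha
  set b := t k with hb
  set c := t (k+1) with hc
  obtain ⟨FLcont, FLderiv, FL'cont, hIooL⟩ := aux_side M D K g u a b hab h4L
  obtain ⟨FRcont, FRderiv, FR'cont, hIooR⟩ := aux_side M D K g u b c hbc h4R
  set u1L := derivWithin u (Icc a b) with hu1L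
  set u2L := derivWithin u1L (Icc a b) with hu2L
  set u3L := derivWithin u2L (Icc a b) with hu3L
  set u1R := derivWithin u (Icc b c) with hu1R
  set u2R := derivWithin u1R (Icc b c) with hu2R
  set u3R := derivWithin u2R (Icc b c) with hu3R
  set FL : ℝ → Fin n → ℝ := fun s => M.mulVec (u2L s) + D.mulVec (u1L s) + K.mulVec (u s) + g
    with hFL
  set FL' : ℝ → Fin n → ℝ := fun s => M.mulVec (u3L s) + D.mulVec (u2L s) + K.mulVec (u1L s)
    with hFL'
  set FR : ℝ → Fin n → ℝ := fun s => M.mulVec (u2R s) + D.mulVec (u1R s) + K.mulVec (u s) + g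
    with hFR
  set FR' : ℝ → Fin n → ℝ := fun s => M.mulVec (u3R s) + D.mulVec (u2R s) + K.mulVec (u1R s)
    with hFR'
  -- matrix facts
  have hMdet : IsUnit M.det := (hMpd.det_pos.ne').isUnit
  have hMiM : ∀ x : Fin n → ℝ, M⁻¹.mulVec (M.mulVec x) = x := by
    intro x
    rw [Matrix.mulVec_mulVec, Matrix.nonsing_inv_mul M hMdet, Matrix.one_mulVec]
  have hMisymm : (M⁻¹)ᵀ = M⁻¹ := by
    rw [Matrix.transpose_nonsing_inv, hMsymm.eq]
  -- the key step: the one-sided force residuals agree at b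
  have key : ∀ e : Fin n → ℝ, (FL b - FR b) ⬝ᵥ e = 0 := by
    obtain ⟨Cψ, hCψ0, hbump⟩ := aux_bump
    intro e
    -- bounds for the one-sided residuals
    obtain ⟨CFL, hCFL⟩ := (isCompact_Icc (a := a) (b := b)).exists_bound_of_continuousOn FLcont
    obtain ⟨CFL', hCFL'⟩ := (isCompact_Icc (a := a) (b := b)).exists_bound_of_continuousOn FL'cont
    obtain ⟨CFR, hCFR⟩ := (isCompact_Icc (a := b) (b := c)).exists_bound_of_continuousOn FRcont
    obtain ⟨CFR', hCFR'⟩ := (isCompact_Icc (a := b) (b := c)).exists_bound_of_continuousOn FR'cont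
    have hCFL0 : 0 ≤ CFL := le_trans (norm_nonneg _) (hCFL b (right_mem_Icc.mpr hab.le))
    have hCFL'0 : 0 ≤ CFL' := le_trans (norm_nonneg _) (hCFL' b (right_mem_Icc.mpr hab.le))
    have hCFR0 : 0 ≤ CFR := le_trans (norm_nonneg _) (hCFR b (left_mem_Icc.mpr hbc.le))
    have hCFR'0 : 0 ≤ CFR' := le_trans (norm_nonneg _) (hCFR' b (left_mem_Icc.mpr hbc.le))
    set vD := M⁻¹.mulVec (D.mulVec e) with hvD
    set vK := M⁻¹.mulVec (K.mulVec e) with hvK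
    set CEL := Cψ * (n * (CFL' * ‖e‖)) + Cψ * (n * (CFL * ‖vD‖)) + n * (CFL * ‖vK‖) with hCEL
    set CER := Cψ * (n * (CFR' * ‖e‖)) + Cψ * (n * (CFR * ‖vD‖)) + n * (CFR * ‖vK‖) with hCER
    set Cbig := 2 * (CEL + CER) with hCbig
    set δ0 := min 1 (min ((b - a)/2) ((c - b)/2)) with hδ0
    have hδ0pos : 0 < δ0 := by
      apply lt_min one_pos
      apply lt_min <;> linarith
    apply aux_eq_zero_of_le_lin _ Cbig δ0 hδ0pos
    intro δ hδpos hδδ0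
    have hδ1 : δ < 1 := lt_of_lt_of_le hδδ0 (min_le_left _ _)
    have hδab : 2*δ < b - a := by
      have := lt_of_lt_of_le hδδ0 ((min_le_right _ _).trans (min_le_left _ _)); linarith
    have hδbc : 2*δ < c - b := by
      have := lt_of_lt_of_le hδδ0 ((min_le_right _ _).trans (min_le_right _ _)); linarith
    obtain ⟨ψ, hψsm, hψb, hψ'b, hψsupp, hψle, hψ'le⟩ := hbump b δ hδpos
    set dψ := deriv ψ with hdψdef
    set d2ψ := deriv dψ with hd2ψdef
    have hψ1 : ∀ s, HasDerivAt ψ (dψ s) s :=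
      fun s => ((hψsm.differentiable (by simp)) s).hasDerivAt
    have hψsm1 : ContDiff ℝ (⊤ : ℕ∞) dψ := by
      have := hψsm.iterate_deriv 1
      simpa [hdψdef] using this
    have hψ2 : ∀ s, HasDerivAt dψ (d2ψ s) s :=
      fun s => ((hψsm1.differentiable (by simp)) s).hasDerivAt
    have hψcont : Continuous ψ := hψsm.continuous
    have hdψcont : Continuous dψ := hψsm1.continuous
    have hd2ψcont : Continuous d2ψ := by
      have := hψsm1.iterate_deriv 1
      exact (by simpa [hd2ψdef] using this : ContDiff ℝ (⊤ : ℕ∞) d2ψ).continuous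
    have hopen : IsOpen {x : ℝ | δ < |x - b|} := by
      have : {x : ℝ | δ < |x - b|} = (fun x : ℝ => |x - b|) ⁻¹' (Ioi δ) := rfl
      rw [this]
      exact (continuous_abs.comp (continuous_sub_right b)).isOpen_preimage _ isOpen_Ioi
    have hψev : ∀ s, δ < |s - b| → ψ =ᶠ[nhds s] (fun _ => 0) :=
      fun s hs => eventuallyEq_of_mem (hopen.mem_nhds hs) (fun x hx => hψsupp x (le_of_lt hx))
    have hdψ0 : ∀ s, δ < |s - b| → dψ s = 0 := by
      intro s hs
      rw [hdψdef, (hψev s hs).deriv_eq]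
      exact deriv_const s 0
    have hd2ψ0 : ∀ s, δ < |s - b| → d2ψ s = 0 := by
      intro s hs
      have hev : dψ =ᶠ[nhds s] (fun _ => 0) :=
        eventuallyEq_of_mem (hopen.mem_nhds hs) (fun x hx => hdψ0 x hx)
      rw [hd2ψdef, hev.deriv_eq]
      exact deriv_const s 0
    set Lφ : ℝ → Fin n → ℝ :=
      fun s => d2ψ s • M.mulVec e + dψ s • D.mulVec e + ψ s • K.mulVec e with hLφdef
    have hLφ0 : ∀ s, δ < |s - b| → Lφ s = 0 := by
      intro s hs
      simp [hLφdef, hψsupp s hs.le, hdψ0 s hs, hd2ψ0 s hs]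
    have hLφcont : Continuous Lφ :=
      ((hd2ψcont.smul continuous_const).add (hdψcont.smul continuous_const)).add
        (hψcont.smul continuous_const)
    set w : ℝ → ℝ → Fin n → ℝ := fun r s => u s + (r * ψ s) • e with hwdef
    have hsmr : ∀ r : ℝ, ContDiff ℝ 4 (fun s => (r * ψ s) • e) :=
      fun r => (contDiff_const.mul (hψsm.of_le (by rw [show ((4:WithTop ℕ∞)) = ((4:ℕ∞) : WithTop ℕ∞) from rfl]; exact_mod_cast le_top))).smul contDiff_const
    have hadm : ∀ r : ℝ, Admissible m t (w r) := by
      intro r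
      constructor
      · exact hu.1.add (((hsmr r).of_le (by norm_num)).contDiffOn)
      · intro j hj1 hj2
        exact (hu.2 j hj1 hj2).add ((hsmr r).contDiffOn)
    have hfar : ∀ j, j ≤ m → j ≠ k → δ < |t j - b| := by
      intro j hjm hjk
      rcases lt_or_gt_of_ne hjk with hlt | hgt
      · have hja : t j ≤ a := aux_mono t m ht j (k-1) (by omega) (by omega)
        have : |t j - b| = b - t j := by rw [abs_sub_comm]; exact abs_of_pos (by linarith)
        rw [this]; linarith
      · have hjc : c ≤ t j := aux_mono t m ht (k+1) j (by omega) (by omega)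
        have : |t j - b| = t j - b := abs_of_pos (by linarith)
        rw [this]; linarith
    have hval : ∀ r : ℝ, ∀ j ≤ m, w r (t j) = u (t j) := by
      intro r j hj
      by_cases hjk : j = k
      · subst hjk
        simp [hwdef, (show ψ (t j) = 0 from hψb)]
      · simp [hwdef, hψsupp _ (hfar j hj hjk).le]
    have hvel : ∀ r : ℝ, ∀ j ≤ m, j ≠ k →
        derivWithin (w r) (Icc (t 0) (t m)) (t j) = derivWithin u (Icc (t 0) (t m)) (t j) := by
      intro r j hj hjk
      have hmem : t j ∈ Icc (t 0) (t m) :=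
        ⟨aux_mono t m ht 0 j (by omega) hj, aux_mono t m ht j m hj le_rfl⟩
      have hudw : DifferentiableWithinAt ℝ u (Icc (t 0) (t m)) (t j) :=
        (hu.1.differentiableOn (by norm_num)) _ hmem
      have hz : (fun s => (r * ψ s) • e) =ᶠ[nhds (t j)] (fun _ => (0 : Fin n → ℝ)) := by
        filter_upwards [hψev (t j) (hfar j hj hjk)] with x hx
        simp [hx]
      have h0 : HasDerivAt (fun s => (r * ψ s) • e) 0 (t j) :=
        (hasDerivAt_const (t j) (0 : Fin n → ℝ)).congr_of_eventuallyEq hz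
      have hsum := (hudw.hasDerivWithinAt.add h0.hasDerivWithinAt).derivWithin (hTud _ hmem)
      rw [add_zero] at hsum
      exact hsum
    have hE : ∀ r : ℝ, elasticEnergy M D K g (t 0) (t m) u
        ≤ elasticEnergy M D K g (t 0) (t m) (w r) := by
      intro r
      have h1 := hmin (w r) (hadm r)
      have hU : (fun j : Fin (m+1) => w r (t j)) = (fun j : Fin (m+1) => u (t j)) :=
        funext fun j => hval r j (Nat.lt_succ_iff.mp j.isLt)
      have hV := hΦ (fun j : Fin (m+1) => u (t j))
        (fun j : Fin (m+1) => derivWithin u (Icc (t 0) (t m)) (t j))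
        (fun j : Fin (m+1) => derivWithin (w r) (Icc (t 0) (t m)) (t j))
        (fun j hj => (hvel r j (Nat.lt_succ_iff.mp j.isLt) hj).symm)
      rw [hU, ← hV] at h1
      linarith
    -- pointwise expansion of the force residual of the perturbed trajectory
    have hforce : ∀ r : ℝ, ∀ s, t 0 < s → s < t m → (∀ j ≤ m, s ≠ t j) →
        forceResidual M D K g (w r) s = forceResidual M D K g u s + r • Lφ s := by
      intro r s hs0 hsmm hsne
      obtain ⟨j, hjm, hsj1, hsj2⟩ := aux_find_interval t m ht s hs0 hsmm hsne
      have htj : t j < t (j+1) := ht j hjm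
      have h4j : ContDiffOn ℝ 4 u (Icc (t j) (t (j+1))) := by
        have := hu.2 (j+1) (by omega) (by omega)
        rwa [Nat.add_sub_cancel] at this
      obtain ⟨-, -, -, hIoo⟩ := aux_side M D K g u (t j) (t (j+1)) htj h4j
      obtain ⟨e1, e2, H1, -⟩ := hIoo s ⟨hsj1, hsj2⟩
      have hw1 : ∀ x ∈ Ioo (t j) (t (j+1)), deriv (w r) x = deriv u x + (r * dψ x) • e := by
        intro x hx
        obtain ⟨-, -, -, hdiffu⟩ := hIoo x hx
        exact (hdiffu.hasDerivAt.add (((hψ1 x).const_mul r).smul_const e)).deriv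
      have hev2 : deriv (w r) =ᶠ[nhds s] (fun x => deriv u x + (r * dψ x) • e) :=
        eventuallyEq_of_mem (Ioo_mem_nhds hsj1 hsj2) hw1
      have H2 : HasDerivAt (fun x => deriv u x + (r * dψ x) • e)
          (derivWithin (derivWithin u (Icc (t j) (t (j+1)))) (Icc (t j) (t (j+1))) s
            + (r * d2ψ s) • e) s :=
        H1.add (((hψ2 s).const_mul r).smul_const e)
      have H3 := H2.congr_of_eventuallyEq hev2
      have hd2 : deriv (deriv (w r)) s = deriv (deriv u) s + (r * d2ψ s) • e := by
        rw [H3.deriv, ← e2]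
      have hd1 : deriv (w r) s = deriv u s + (r * dψ s) • e := hw1 s ⟨hsj1, hsj2⟩
      show M.mulVec (deriv (deriv (w r)) s) + D.mulVec (deriv (w r) s) + K.mulVec (w r s) + g
          = (M.mulVec (deriv (deriv u) s) + D.mulVec (deriv u s) + K.mulVec (u s) + g) + r • Lφ s
      rw [hd2, hd1]
      show M.mulVec (deriv (deriv u) s + (r * d2ψ s) • e)
          + D.mulVec (deriv u s + (r * dψ s) • e) + K.mulVec (u s + (r * ψ s) • e) + g = _
      simp only [hLφdef, Matrix.mulVec_add, Matrix.mulVec_smul]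
      module
    -- the three integrands
    set O : ℝ → ℝ := fun s =>
      forceResidual M D K g u s ⬝ᵥ M⁻¹.mulVec (forceResidual M D K g u s) with hOdef
    set G : ℝ → ℝ := fun s =>
      forceResidual M D K g u s ⬝ᵥ M⁻¹.mulVec (Lφ s)
        + Lφ s ⬝ᵥ M⁻¹.mulVec (forceResidual M D K g u s) with hGdef
    set H : ℝ → ℝ := fun s => Lφ s ⬝ᵥ M⁻¹.mulVec (Lφ s) with hHdef
    have hInt : ∀ r : ℝ, ∀ s, t 0 < s → s < t m → (∀ j ≤ m, s ≠ t j) →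
        forceResidual M D K g (w r) s ⬝ᵥ M⁻¹.mulVec (forceResidual M D K g (w r) s)
          = O s + r * G s + r^2 * H s := by
      intro r s h1 h2 h3
      rw [hforce r s h1 h2 h3]
      simp only [hOdef, hGdef, hHdef, Matrix.mulVec_add, Matrix.mulVec_smul,
        add_dotProduct, dotProduct_add, smul_dotProduct,
        dotProduct_smul, smul_eq_mul]
      ring
    -- integrability of O over the whole interval
    have hOpiece : ∀ j, j < m → IntervalIntegrable O volume (t j) (t (j+1)) := by
      intro j hjm
      have htj : t j < t (j+1) := ht j hjm
      have h4j : ContDiffOn ℝ 4 u (Icc (t j) (t (j+1))) := by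
        have := hu.2 (j+1) (by omega) (by omega)
        rwa [Nat.add_sub_cancel] at this
      obtain ⟨hFcont, -, -, hIoo⟩ := aux_side M D K g u (t j) (t (j+1)) htj h4j
      have hcont : ContinuousOn (fun s =>
          (M.mulVec (derivWithin (derivWithin u (Icc (t j) (t (j+1)))) (Icc (t j) (t (j+1))) s)
            + D.mulVec (derivWithin u (Icc (t j) (t (j+1))) s) + K.mulVec (u s) + g) ⬝ᵥ
          M⁻¹.mulVec
            (M.mulVec (derivWithin (derivWithin u (Icc (t j) (t (j+1)))) (Icc (t j) (t (j+1))) s)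
              + D.mulVec (derivWithin u (Icc (t j) (t (j+1))) s) + K.mulVec (u s) + g))
          (Icc (t j) (t (j+1))) :=
        aux_dot_contOn hFcont (aux_mulVec_contOn hFcont)
      apply aux_integrable_congr htj.le
        (ContinuousOn.intervalIntegrable (by rw [uIcc_of_le htj.le]; exact hcont))
      intro s hs
      obtain ⟨e1, e2, -, -⟩ := hIoo s hs
      simp only [hOdef, forceResidual, e1, e2]
    have hOchain : ∀ j, j ≤ m → IntervalIntegrable O volume (t 0) (t j) := by
      intro j
      induction j with
      | zero => intro _; exact IntervalIntegrable.refl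
      | succ j ih => intro hj; exact (ih (by omega)).trans (hOpiece j (by omega))
    have hOint : IntervalIntegrable O volume (t 0) (t m) := hOchain m le_rfl
    -- the split points
    set p := b - 2*δ with hp
    set q := b + 2*δ with hq
    have hap : a < p := by rw [hp]; linarith
    have hpb : p < b := by rw [hp]; linarith
    have hbq : b < q := by rw [hq]; linarith
    have hqc : q < c := by rw [hq]; linarith
    have ht0p : t 0 ≤ p := le_trans ht0a hap.le
    have hqtm : q ≤ t m := le_trans hqc.le hcctm
    have hGzero : ∀ s, δ < |s - b| → G s = 0 := by
      intro s hs
      simp [hGdef, hLφ0 s hs]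
    have hGz1 : ∀ s ∈ Ioo (t 0) p, G s = 0 := by
      intro s hs
      apply hGzero
      have h2 : δ < b - s := by
        have := hs.2; rw [hp] at this; linarith
      calc δ < b - s := h2
        _ ≤ |s - b| := by rw [abs_sub_comm]; exact le_abs_self _
    have hGz2 : ∀ s ∈ Ioo q (t m), G s = 0 := by
      intro s hs
      apply hGzero
      have h2 : δ < s - b := by
        have := hs.1; rw [hq] at this; linarith
      calc δ < s - b := h2
        _ ≤ |s - b| := le_abs_self _
    have hGL : ∀ s ∈ Ioo p b,
        G s = FL s ⬝ᵥ M⁻¹.mulVec (Lφ s) + Lφ s ⬝ᵥ M⁻¹.mulVec (FL s) := by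
      intro s hs
      obtain ⟨e1, e2, -, -⟩ := hIooL s ⟨hap.trans hs.1, hs.2⟩
      simp only [hGdef, forceResidual, e1, e2, hFL]
    have hGR : ∀ s ∈ Ioo b q,
        G s = FR s ⬝ᵥ M⁻¹.mulVec (Lφ s) + Lφ s ⬝ᵥ M⁻¹.mulVec (FR s) := by
      intro s hs
      obtain ⟨e1, e2, -, -⟩ := hIooR s ⟨hs.1, hs.2.trans hqc⟩
      simp only [hGdef, forceResidual, e1, e2, hFR]
    have hsubL : Icc p b ⊆ Icc a b := Icc_subset_Icc hap.le le_rfl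
    have hsubR : Icc b q ⊆ Icc b c := Icc_subset_Icc le_rfl hqc.le
    have hGLcont : ContinuousOn
        (fun s => FL s ⬝ᵥ M⁻¹.mulVec (Lφ s) + Lφ s ⬝ᵥ M⁻¹.mulVec (FL s)) (Icc a b) :=
      (aux_dot_contOn FLcont (aux_mulVec_contOn hLφcont.continuousOn)).add
        (aux_dot_contOn hLφcont.continuousOn (aux_mulVec_contOn FLcont))
    have hGRcont : ContinuousOn
        (fun s => FR s ⬝ᵥ M⁻¹.mulVec (Lφ s) + Lφ s ⬝ᵥ M⁻¹.mulVec (FR s)) (Icc b c) :=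
      (aux_dot_contOn FRcont (aux_mulVec_contOn hLφcont.continuousOn)).add
        (aux_dot_contOn hLφcont.continuousOn (aux_mulVec_contOn FRcont))
    have hGintL : IntervalIntegrable G volume p b :=
      aux_integrable_congr hpb.le
        (ContinuousOn.intervalIntegrable (by rw [uIcc_of_le hpb.le]; exact hGLcont.mono hsubL))
        hGL
    have hGintR : IntervalIntegrable G volume b q :=
      aux_integrable_congr hbq.le
        (ContinuousOn.intervalIntegrable (by rw [uIcc_of_le hbq.le]; exact hGRcont.mono hsubR))
        hGR
    have hGint0a : IntervalIntegrable G volume (t 0) p :=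
      aux_integrable_congr ht0p (g := fun _ => (0:ℝ)) intervalIntegrable_const hGz1
    have hGint0b : IntervalIntegrable G volume q (t m) :=
      aux_integrable_congr hqtm (g := fun _ => (0:ℝ)) intervalIntegrable_const hGz2
    have hGint : IntervalIntegrable G volume (t 0) (t m) :=
      ((hGint0a.trans hGintL).trans hGintR).trans hGint0b
    have hHcont : Continuous H := by
      rw [← continuousOn_univ]
      exact aux_dot_contOn hLφcont.continuousOn (aux_mulVec_contOn hLφcont.continuousOn)
    have hHint : IntervalIntegrable H volume (t 0) (t m) := hHcont.intervalIntegrable _ _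
    -- expansion of the elastic energy
    have hEu : elasticEnergy M D K g (t 0) (t m) u = (1/2) * ∫ s in (t 0)..(t m), O s := rfl
    have hEexp : ∀ r : ℝ, elasticEnergy M D K g (t 0) (t m) (w r)
        = elasticEnergy M D K g (t 0) (t m) u
          + r * ((1/2) * ∫ s in (t 0)..(t m), G s)
          + r^2 * ((1/2) * ∫ s in (t 0)..(t m), H s) := by
      intro r
      have hae : ∀ᵐ x ∂(volume : Measure ℝ), x ∈ Set.uIoc (t 0) (t m) →
          forceResidual M D K g (w r) x ⬝ᵥ M⁻¹.mulVec (forceResidual M D K g (w r) x)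
            = O x + r * G x + r^2 * H x := by
        filter_upwards [aux_ae_nodes m t] with x hx hxm
        rw [Set.uIoc_of_le ht0tm.le] at hxm
        exact hInt r x hxm.1 (lt_of_le_of_ne hxm.2 (hx m le_rfl)) hx
      have h1 : (∫ s in (t 0)..(t m),
          forceResidual M D K g (w r) s ⬝ᵥ M⁻¹.mulVec (forceResidual M D K g (w r) s))
          = ∫ s in (t 0)..(t m), (O s + r * G s + r^2 * H s) :=
        intervalIntegral.integral_congr_ae hae
      have h2 : (∫ s in (t 0)..(t m), (O s + r * G s + r^2 * H s))
          = (∫ s in (t 0)..(t m), O s) + r * (∫ s in (t 0)..(t m), G s)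
            + r^2 * (∫ s in (t 0)..(t m), H s) := by
        rw [intervalIntegral.integral_add (hOint.add (hGint.const_mul r))
            (hHint.const_mul (r^2)),
          intervalIntegral.integral_add hOint (hGint.const_mul r),
          intervalIntegral.integral_const_mul, intervalIntegral.integral_const_mul]
      have hEw : elasticEnergy M D K g (t 0) (t m) (w r) = (1/2) * ∫ s in (t 0)..(t m),
          forceResidual M D K g (w r) s ⬝ᵥ M⁻¹.mulVec (forceResidual M D K g (w r) s) := rfl
      rw [hEw, h1, h2, hEu]
      ring
    -- minimality kills the linear term
    have hIG0 : (1/2) * (∫ s in (t 0)..(t m), G s) = 0 := by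
      apply aux_zero_of_quadratic _ ((1/2) * ∫ s in (t 0)..(t m), H s)
      intro r
      have h1 := hE r
      rw [hEexp r] at h1
      linarith
    -- symmetrize
    have hGL2 : ∀ s ∈ Ioo p b, G s = 2 * (FL s ⬝ᵥ M⁻¹.mulVec (Lφ s)) := by
      intro s hs; rw [hGL s hs, aux_dot_symm hMisymm (Lφ s) (FL s)]; ring
    have hGR2 : ∀ s ∈ Ioo b q, G s = 2 * (FR s ⬝ᵥ M⁻¹.mulVec (Lφ s)) := by
      intro s hs; rw [hGR s hs, aux_dot_symm hMisymm (Lφ s) (FR s)]; ring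
    set EL : ℝ → ℝ := fun s =>
      -(dψ s * (FL' s ⬝ᵥ e)) + (dψ s * (FL s ⬝ᵥ vD) + ψ s * (FL s ⬝ᵥ vK)) with hELdef
    set ER : ℝ → ℝ := fun s =>
      -(dψ s * (FR' s ⬝ᵥ e)) + (dψ s * (FR s ⬝ᵥ vD) + ψ s * (FR s ⬝ᵥ vK)) with hERdef
    have hdotL : ∀ s, FL s ⬝ᵥ M⁻¹.mulVec (Lφ s)
        = (d2ψ s * (FL s ⬝ᵥ e) + dψ s * (FL' s ⬝ᵥ e)) + EL s := by
      intro s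
      simp only [hELdef, hLφdef, hvD, hvK, Matrix.mulVec_add, Matrix.mulVec_smul,
        dotProduct_add, dotProduct_smul, smul_eq_mul, hMiM]
      ring
    have hdotR : ∀ s, FR s ⬝ᵥ M⁻¹.mulVec (Lφ s)
        = (d2ψ s * (FR s ⬝ᵥ e) + dψ s * (FR' s ⬝ᵥ e)) + ER s := by
      intro s
      simp only [hERdef, hLφdef, hvD, hvK, Matrix.mulVec_add, Matrix.mulVec_smul,
        dotProduct_add, dotProduct_smul, smul_eq_mul, hMiM]
      ring
    -- FTC pieces
    have hFTCintL : IntervalIntegrable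
        (fun s => d2ψ s * (FL s ⬝ᵥ e) + dψ s * (FL' s ⬝ᵥ e)) volume p b :=
      ContinuousOn.intervalIntegrable (by
        rw [uIcc_of_le hpb.le]
        exact (hd2ψcont.continuousOn.mul
            (aux_dot_contOn (FLcont.mono hsubL) continuousOn_const)).add
          (hdψcont.continuousOn.mul
            (aux_dot_contOn (FL'cont.mono hsubL) continuousOn_const)))
    have hFTCintR : IntervalIntegrable
        (fun s => d2ψ s * (FR s ⬝ᵥ e) + dψ s * (FR' s ⬝ᵥ e)) volume b q :=
      ContinuousOn.intervalIntegrable (by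
        rw [uIcc_of_le hbq.le]
        exact (hd2ψcont.continuousOn.mul
            (aux_dot_contOn (FRcont.mono hsubR) continuousOn_const)).add
          (hdψcont.continuousOn.mul
            (aux_dot_contOn (FR'cont.mono hsubR) continuousOn_const)))
    have hdψp : dψ p = 0 := by
      apply hdψ0
      have hh : p - b = -(2*δ) := by rw [hp]; ring
      rw [hh, abs_neg, abs_of_pos (by linarith)]; linarith
    have hdψq : dψ q = 0 := by
      apply hdψ0
      have hh : q - b = 2*δ := by rw [hq]; ring
      rw [hh, abs_of_pos (by linarith)]; linarith
    have hFTCL : (∫ s in p..b, (d2ψ s * (FL s ⬝ᵥ e) + dψ s * (FL' s ⬝ᵥ e)))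
        = FL b ⬝ᵥ e := by
      have h := intervalIntegral.integral_eq_sub_of_hasDeriv_right_of_le hpb.le
        (f := fun s => dψ s * (FL s ⬝ᵥ e))
        (f' := fun s => d2ψ s * (FL s ⬝ᵥ e) + dψ s * (FL' s ⬝ᵥ e))
        (hdψcont.continuousOn.mul (aux_dot_contOn (FLcont.mono hsubL) continuousOn_const))
        (fun x hx => by
          have hxa : x ∈ Ioo a b := ⟨hap.trans hx.1, hx.2⟩
          have hFLx : HasDerivAt FL (FL' x) x :=
            (FLderiv x (Ioo_subset_Icc_self hxa)).hasDerivAt (Icc_mem_nhds hxa.1 hxa.2)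
          exact ((hψ2 x).mul (aux_dot_hasDeriv e hFLx)).hasDerivWithinAt)
        hFTCintL
      rw [h]
      simp only [hψ'b, hdψp]
      ring
    have hFTCR : (∫ s in b..q, (d2ψ s * (FR s ⬝ᵥ e) + dψ s * (FR' s ⬝ᵥ e)))
        = -(FR b ⬝ᵥ e) := by
      have h := intervalIntegral.integral_eq_sub_of_hasDeriv_right_of_le hbq.le
        (f := fun s => dψ s * (FR s ⬝ᵥ e))
        (f' := fun s => d2ψ s * (FR s ⬝ᵥ e) + dψ s * (FR' s ⬝ᵥ e))
        (hdψcont.continuousOn.mul (aux_dot_contOn (FRcont.mono hsubR) continuousOn_const))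
        (fun x hx => by
          have hxa : x ∈ Ioo b c := ⟨hx.1, hx.2.trans hqc⟩
          have hFRx : HasDerivAt FR (FR' x) x :=
            (FRderiv x (Ioo_subset_Icc_self hxa)).hasDerivAt (Icc_mem_nhds hxa.1 hxa.2)
          exact ((hψ2 x).mul (aux_dot_hasDeriv e hFRx)).hasDerivWithinAt)
        hFTCintR
      rw [h]
      simp only [hψ'b, hdψq]
      ring
    have hELint : IntervalIntegrable EL volume p b :=
      ContinuousOn.intervalIntegrable (by
        rw [uIcc_of_le hpb.le]
        simp only [hELdef]
        exact ((hdψcont.continuousOn.mul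
            (aux_dot_contOn (FL'cont.mono hsubL) continuousOn_const)).neg).add
          ((hdψcont.continuousOn.mul
            (aux_dot_contOn (FLcont.mono hsubL) continuousOn_const)).add
            (hψcont.continuousOn.mul
              (aux_dot_contOn (FLcont.mono hsubL) continuousOn_const))))
    have hERint : IntervalIntegrable ER volume b q :=
      ContinuousOn.intervalIntegrable (by
        rw [uIcc_of_le hbq.le]
        simp only [hERdef]
        exact ((hdψcont.continuousOn.mul
            (aux_dot_contOn (FR'cont.mono hsubR) continuousOn_const)).neg).add
          ((hdψcont.continuousOn.mul
            (aux_dot_contOn (FRcont.mono hsubR) continuousOn_const)).add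
            (hψcont.continuousOn.mul
              (aux_dot_contOn (FRcont.mono hsubR) continuousOn_const))))
    have hintL : (∫ s in p..b, G s) = 2 * ((FL b ⬝ᵥ e) + ∫ s in p..b, EL s) := by
      rw [aux_integral_congr hpb.le hGL2, intervalIntegral.integral_const_mul]
      congr 1
      rw [intervalIntegral.integral_congr
        (g := fun s => (d2ψ s * (FL s ⬝ᵥ e) + dψ s * (FL' s ⬝ᵥ e)) + EL s)
        (fun s _ => hdotL s)]
      rw [intervalIntegral.integral_add hFTCintL hELint, hFTCL]
    have hintR : (∫ s in b..q, G s) = 2 * (-(FR b ⬝ᵥ e) + ∫ s in b..q, ER s) := by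
      rw [aux_integral_congr hbq.le hGR2, intervalIntegral.integral_const_mul]
      congr 1
      rw [intervalIntegral.integral_congr
        (g := fun s => (d2ψ s * (FR s ⬝ᵥ e) + dψ s * (FR' s ⬝ᵥ e)) + ER s)
        (fun s _ => hdotR s)]
      rw [intervalIntegral.integral_add hFTCintR hERint, hFTCR]
    -- bounds on the error terms
    have hdotbound : ∀ (x : Fin n → ℝ) (Cf : ℝ) (v : Fin n → ℝ), ‖x‖ ≤ Cf →
        |x ⬝ᵥ v| ≤ n * (Cf * ‖v‖) := by
      intro x Cf v hx
      refine (aux_dot_bound x v).trans ?_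
      have h1 : ‖x‖ * ‖v‖ ≤ Cf * ‖v‖ := mul_le_mul_of_nonneg_right hx (norm_nonneg v)
      have hn0 : (0:ℝ) ≤ (n:ℝ) := Nat.cast_nonneg n
      exact mul_le_mul_of_nonneg_left h1 hn0
    have hELbound : |∫ s in p..b, EL s| ≤ CEL * (2*δ) := by
      have hb' : |b - p| = 2*δ := by
        rw [hp, show b - (b - 2*δ) = 2*δ by ring]
        exact abs_of_pos (by linarith)
      have h := intervalIntegral.norm_integral_le_of_norm_le_const (C := CEL) (f := EL)
        (a := p) (b := b) ?_
      · rw [Real.norm_eq_abs, hb'] at h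
        exact h
      · intro x hx
        rw [Set.uIoc_of_le hpb.le] at hx
        have hxI : x ∈ Icc a b := ⟨hap.le.trans hx.1.le, hx.2⟩
        have b1 : |FL' x ⬝ᵥ e| ≤ n * (CFL' * ‖e‖) := hdotbound _ _ _ (hCFL' x hxI)
        have b2 : |FL x ⬝ᵥ vD| ≤ n * (CFL * ‖vD‖) := hdotbound _ _ _ (hCFL x hxI)
        have b3 : |FL x ⬝ᵥ vK| ≤ n * (CFL * ‖vK‖) := hdotbound _ _ _ (hCFL x hxI)
        have e1' : |dψ x * (FL' x ⬝ᵥ e)| ≤ Cψ * (n * (CFL' * ‖e‖)) := by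
          rw [abs_mul]; exact mul_le_mul (hψ'le x) b1 (abs_nonneg _) hCψ0
        have e2' : |dψ x * (FL x ⬝ᵥ vD)| ≤ Cψ * (n * (CFL * ‖vD‖)) := by
          rw [abs_mul]; exact mul_le_mul (hψ'le x) b2 (abs_nonneg _) hCψ0
        have e3' : |ψ x * (FL x ⬝ᵥ vK)| ≤ 1 * (n * (CFL * ‖vK‖)) := by
          rw [abs_mul]
          exact mul_le_mul ((hψle x).trans hδ1.le) b3 (abs_nonneg _) zero_le_one
        rw [Real.norm_eq_abs]
        simp only [hELdef]
        calc |(-(dψ x * (FL' x ⬝ᵥ e)) + (dψ x * (FL x ⬝ᵥ vD) + ψ x * (FL x ⬝ᵥ vK)))|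
            ≤ |(-(dψ x * (FL' x ⬝ᵥ e)))| + |(dψ x * (FL x ⬝ᵥ vD) + ψ x * (FL x ⬝ᵥ vK))| :=
              abs_add_le _ _
          _ ≤ |dψ x * (FL' x ⬝ᵥ e)| + (|dψ x * (FL x ⬝ᵥ vD)| + |ψ x * (FL x ⬝ᵥ vK)|) := by
              rw [abs_neg]; exact add_le_add le_rfl (abs_add_le _ _)
          _ ≤ CEL := by rw [hCEL]; linarith
    have hERbound : |∫ s in b..q, ER s| ≤ CER * (2*δ) := by
      have hb' : |q - b| = 2*δ := by
        rw [hq, show b + 2*δ - b = 2*δ by ring]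
        exact abs_of_pos (by linarith)
      have h := intervalIntegral.norm_integral_le_of_norm_le_const (C := CER) (f := ER)
        (a := b) (b := q) ?_
      · rw [Real.norm_eq_abs, hb'] at h
        exact h
      · intro x hx
        rw [Set.uIoc_of_le hbq.le] at hx
        have hxI : x ∈ Icc b c := ⟨hx.1.le, hx.2.trans hqc.le⟩
        have b1 : |FR' x ⬝ᵥ e| ≤ n * (CFR' * ‖e‖) := hdotbound _ _ _ (hCFR' x hxI)
        have b2 : |FR x ⬝ᵥ vD| ≤ n * (CFR * ‖vD‖) := hdotbound _ _ _ (hCFR x hxI)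
        have b3 : |FR x ⬝ᵥ vK| ≤ n * (CFR * ‖vK‖) := hdotbound _ _ _ (hCFR x hxI)
        have e1' : |dψ x * (FR' x ⬝ᵥ e)| ≤ Cψ * (n * (CFR' * ‖e‖)) := by
          rw [abs_mul]; exact mul_le_mul (hψ'le x) b1 (abs_nonneg _) hCψ0
        have e2' : |dψ x * (FR x ⬝ᵥ vD)| ≤ Cψ * (n * (CFR * ‖vD‖)) := by
          rw [abs_mul]; exact mul_le_mul (hψ'le x) b2 (abs_nonneg _) hCψ0
        have e3' : |ψ x * (FR x ⬝ᵥ vK)| ≤ 1 * (n * (CFR * ‖vK‖)) := by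
          rw [abs_mul]
          exact mul_le_mul ((hψle x).trans hδ1.le) b3 (abs_nonneg _) zero_le_one
        rw [Real.norm_eq_abs]
        simp only [hERdef]
        calc |(-(dψ x * (FR' x ⬝ᵥ e)) + (dψ x * (FR x ⬝ᵥ vD) + ψ x * (FR x ⬝ᵥ vK)))|
            ≤ |(-(dψ x * (FR' x ⬝ᵥ e)))| + |(dψ x * (FR x ⬝ᵥ vD) + ψ x * (FR x ⬝ᵥ vK))| :=
              abs_add_le _ _
          _ ≤ |dψ x * (FR' x ⬝ᵥ e)| + (|dψ x * (FR x ⬝ᵥ vD)| + |ψ x * (FR x ⬝ᵥ vK)|) := by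
              rw [abs_neg]; exact add_le_add le_rfl (abs_add_le _ _)
          _ ≤ CER := by rw [hCER]; linarith
    -- assemble
    have h0a : (∫ s in (t 0)..p, G s) = 0 := by
      rw [aux_integral_congr ht0p hGz1]; simp
    have h0b : (∫ s in q..(t m), G s) = 0 := by
      rw [aux_integral_congr hqtm hGz2]; simp
    have hsplit : (∫ s in (t 0)..(t m), G s)
        = (∫ s in p..b, G s) + (∫ s in b..q, G s) := by
      have e1 := intervalIntegral.integral_add_adjacent_intervals hGint0a hGintL
      have e2 := intervalIntegral.integral_add_adjacent_intervals
        (hGint0a.trans hGintL) hGintR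
      have e3 := intervalIntegral.integral_add_adjacent_intervals
        ((hGint0a.trans hGintL).trans hGintR) hGint0b
      rw [← e3, ← e2, ← e1, h0a, h0b]
      ring
    have hX : (FL b - FR b) ⬝ᵥ e = -(∫ s in p..b, EL s) - (∫ s in b..q, ER s) := by
      have h0 : (1/2) * ((∫ s in p..b, G s) + (∫ s in b..q, G s)) = 0 := by
        rw [← hsplit]; exact hIG0
      rw [hintL, hintR] at h0
      rw [sub_dotProduct]
      linarith
    rw [hX, show -(∫ s in p..b, EL s) - (∫ s in b..q, ER s)
        = (-(∫ s in p..b, EL s)) + (-(∫ s in b..q, ER s)) by ring]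
    calc |(-(∫ s in p..b, EL s)) + (-(∫ s in b..q, ER s))|
        ≤ |(-(∫ s in p..b, EL s))| + |(-(∫ s in b..q, ER s))| := abs_add_le _ _
      _ = |∫ s in p..b, EL s| + |∫ s in b..q, ER s| := by rw [abs_neg, abs_neg]
      _ ≤ CEL * (2*δ) + CER * (2*δ) := add_le_add hELbound hERbound
      _ = δ * Cbig := by rw [hCbig]; ring
  -- conclude
  have hbmem : b ∈ Icc (t 0) (t m) := ⟨ht0b.le, hbtm.le⟩
  have hbnh : Icc (t 0) (t m) ∈ nhds b := Icc_mem_nhds ht0b hbtm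
  have hudiffb : DifferentiableAt ℝ u b :=
    ((hu.1 b hbmem).contDiffAt hbnh).differentiableAt (by norm_num)
  have hu1Lb : u1L b = deriv u b :=
    hudiffb.derivWithin ((uniqueDiffOn_Icc hab) b (right_mem_Icc.mpr hab.le))
  have hu1Rb : u1R b = deriv u b :=
    hudiffb.derivWithin ((uniqueDiffOn_Icc hbc) b (left_mem_Icc.mpr hbc.le))
  have hFLR : FL b = FR b := by
    funext i
    have := key (Pi.single i 1)
    rw [sub_dotProduct] at this
    simpa [dotProduct_single] using sub_eq_zero.mp (by linarith [this] : 
      FL b ⬝ᵥ Pi.single i 1 - FR b ⬝ᵥ Pi.single i 1 = 0)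
  have hMu2 : M.mulVec (u2L b) = M.mulVec (u2R b) := by
    have h1 : FL b = FR b := hFLR
    rw [hFL, hFR] at h1
    simp only [hu1Lb, hu1Rb] at h1
    have := add_right_cancel h1
    have := add_right_cancel this
    exact add_right_cancel this
  have hu2eq : u2L b = u2R b := by
    have := congrArg (M⁻¹.mulVec ·) hMu2
    simpa [hMiM] using this
  -- rewrite the goal
  have hudL : UniqueDiffOn ℝ (Icc a b) := uniqueDiffOn_Icc hab
  have hudR : UniqueDiffOn ℝ (Icc b c) := uniqueDiffOn_Icc hbc
  have hgl : iteratedDerivWithin 2 u (Icc a b) b = u2L b := by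
    rw [iteratedDerivWithin_succ]
    exact derivWithin_congr
      (fun y hy => congrFun iteratedDerivWithin_one y)
      (congrFun iteratedDerivWithin_one b)
  have hgr : iteratedDerivWithin 2 u (Icc b c) b = u2R b := by
    rw [iteratedDerivWithin_succ]
    exact derivWithin_congr
      (fun y hy => congrFun iteratedDerivWithin_one y)
      (congrFun iteratedDerivWithin_one b)
  rw [hgl, hgr, hu2eq]
end

section
/- Let [a,b] be a compact interval, let u : [a,b] → ℝⁿ be four times continuously differentiable and v : [a,b] → ℝⁿ twice continuously differentiable, and write F(t) = M ü(t) + D u̇(t) + K u(t) + g. Then ∫_a^b ( v̈ᵀ + v̇ᵀ D M⁻¹ + vᵀ K M⁻¹ ) F dt = ∫_a^b vᵀ ( M u'''' + (2K − D M⁻¹ D) ü + K M⁻¹ (K u + g) ) dt + [ v̇(t)ᵀ F(t) + v(t)ᵀ D M⁻¹ F(t) − v(t)ᵀ Ḟ(t) ]_{t=a}^{t=b}, where Ḟ = M u''' + D ü + K u̇. -/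
open Matrix Set

section aux
variable {n : ℕ}

lemma hasDerivWithinAt_dotProduct {f g : ℝ → Fin n → ℝ} {f' g' : Fin n → ℝ}
    {s : Set ℝ} {x : ℝ} (hf : HasDerivWithinAt f f' s x) (hg : HasDerivWithinAt g g' s x) :
    HasDerivWithinAt (fun t => f t ⬝ᵥ g t) (f' ⬝ᵥ g x + f x ⬝ᵥ g') s x := by
  have h : HasDerivWithinAt (fun t => ∑ i, f t i * g t i)
      (∑ i, (f' i * g x i + f x i * g' i)) s x :=
    HasDerivWithinAt.fun_sum fun i _ =>
      ((hasDerivWithinAt_pi.1 hf i).mul (hasDerivWithinAt_pi.1 hg i))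
  simpa [dotProduct, Finset.sum_add_distrib] using h

lemma hasDerivWithinAt_mulVec (A : Matrix (Fin n) (Fin n) ℝ) {f : ℝ → Fin n → ℝ} {f' : Fin n → ℝ}
    {s : Set ℝ} {x : ℝ} (hf : HasDerivWithinAt f f' s x) :
    HasDerivWithinAt (fun t => A.mulVec (f t)) (A.mulVec f') s x := by
  rw [hasDerivWithinAt_pi]
  intro i
  have h : HasDerivWithinAt (fun t => ∑ j, A i j * f t j) (∑ j, A i j * f' j) s x :=
    HasDerivWithinAt.fun_sum fun j _ => (hasDerivWithinAt_pi.1 hf j).const_mul (A i j)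
  simpa [Matrix.mulVec, dotProduct] using h

lemma continuousOn_dotProduct' {f g : ℝ → Fin n → ℝ} {s : Set ℝ}
    (hf : ContinuousOn f s) (hg : ContinuousOn g s) :
    ContinuousOn (fun t => f t ⬝ᵥ g t) s := by
  simp only [dotProduct]
  exact continuousOn_finset_sum _ fun i _ =>
    (((continuous_apply i).comp_continuousOn hf).mul ((continuous_apply i).comp_continuousOn hg))

lemma continuousOn_mulVec' (A : Matrix (Fin n) (Fin n) ℝ) {f : ℝ → Fin n → ℝ} {s : Set ℝ}
    (hf : ContinuousOn f s) : ContinuousOn (fun t => A.mulVec (f t)) s := by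
  refine continuousOn_pi.2 fun i => ?_
  simp only [Matrix.mulVec, dotProduct]
  exact continuousOn_finset_sum _ fun j _ =>
    continuousOn_const.mul ((continuous_apply j).comp_continuousOn hf)

lemma hasDerivWithinAt_iteratedDerivWithin {f : ℝ → Fin n → ℝ} {s : Set ℝ} {N : ℕ} {k : ℕ}
    (hf : ContDiffOn ℝ N f s) (hk : k < N) (hs : UniqueDiffOn ℝ s) {x : ℝ} (hx : x ∈ s) :
    HasDerivWithinAt (iteratedDerivWithin k f s)
      (iteratedDerivWithin (k+1) f s x) s x := by
  have h := (hf.differentiableOn_iteratedDerivWithin (by exact_mod_cast hk) hs x hx).hasDerivWithinAt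
  rwa [← iteratedDerivWithin_succ] at h

end aux

/-- The force residual `F(t) = M ü(t) + D u̇(t) + K u(t) + g`, with derivatives taken
within the interval `[a, b]`. -/
noncomputable def resF {n : ℕ} (M D K : Matrix (Fin n) (Fin n) ℝ) (g : Fin n → ℝ)
    (a b : ℝ) (u : ℝ → Fin n → ℝ) (s : ℝ) : Fin n → ℝ :=
  M.mulVec (iteratedDerivWithin 2 u (Icc a b) s)
    + D.mulVec (iteratedDerivWithin 1 u (Icc a b) s) + K.mulVec (u s) + g

/-- The derivative `Ḟ(t) = M u'''(t) + D ü(t) + K u̇(t)` of the force residual. -/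
noncomputable def resFdot {n : ℕ} (M D K : Matrix (Fin n) (Fin n) ℝ)
    (a b : ℝ) (u : ℝ → Fin n → ℝ) (s : ℝ) : Fin n → ℝ :=
  M.mulVec (iteratedDerivWithin 3 u (Icc a b) s)
    + D.mulVec (iteratedDerivWithin 2 u (Icc a b) s)
    + K.mulVec (iteratedDerivWithin 1 u (Icc a b) s)

/-- Integration by parts (twice) for the variation of the elastic energy:
for `u ∈ C⁴([a,b])`, `v ∈ C²([a,b])` and `F = M ü + D u̇ + K u + g`,
`∫_a^b (v̈ᵀ + v̇ᵀ D M⁻¹ + vᵀ K M⁻¹) F dt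
  = ∫_a^b vᵀ (M u'''' + (2K − D M⁻¹ D) ü + K M⁻¹ (K u + g)) dt
    + [v̇ᵀ F + vᵀ D M⁻¹ F − vᵀ Ḟ]_a^b`. -/
theorem elastic_integration_by_parts
    (n : ℕ) (hn : 0 < n)
    (M K : Matrix (Fin n) (Fin n) ℝ) (hMsymm : M.IsSymm) (hKsymm : K.IsSymm)
    (hM : IsUnit M.det)
    (α β : ℝ) (D : Matrix (Fin n) (Fin n) ℝ) (hD : D = α • M + β • K)
    (g : Fin n → ℝ)
    (a b : ℝ) (hab : a < b)
    (u v : ℝ → Fin n → ℝ)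
    (hu : ContDiffOn ℝ 4 u (Icc a b))
    (hv : ContDiffOn ℝ 2 v (Icc a b)) :
    (∫ s in a..b,
        ((iteratedDerivWithin 2 v (Icc a b) s) ⬝ᵥ (resF M D K g a b u s)
          + (iteratedDerivWithin 1 v (Icc a b) s) ⬝ᵥ ((D * M⁻¹).mulVec (resF M D K g a b u s))
          + (v s) ⬝ᵥ ((K * M⁻¹).mulVec (resF M D K g a b u s))))
    = (∫ s in a..b,
        (v s) ⬝ᵥ (M.mulVec (iteratedDerivWithin 4 u (Icc a b) s)
          + ((2:ℝ) • K - D * M⁻¹ * D).mulVec (iteratedDerivWithin 2 u (Icc a b) s)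
          + (K * M⁻¹).mulVec (K.mulVec (u s) + g)))
      + (((iteratedDerivWithin 1 v (Icc a b) b) ⬝ᵥ (resF M D K g a b u b)
            + (v b) ⬝ᵥ ((D * M⁻¹).mulVec (resF M D K g a b u b))
            - (v b) ⬝ᵥ (resFdot M D K a b u b))
         - ((iteratedDerivWithin 1 v (Icc a b) a) ⬝ᵥ (resF M D K g a b u a)
            + (v a) ⬝ᵥ ((D * M⁻¹).mulVec (resF M D K g a b u a))
            - (v a) ⬝ᵥ (resFdot M D K a b u a))) := by
  have hab' : a ≤ b := hab.le
  have hud : UniqueDiffOn ℝ (Icc a b) := uniqueDiffOn_Icc hab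
  set I := Icc a b with hIdef
  set A := D * M⁻¹ with hA
  set B := K * M⁻¹ with hB
  -- matrix identities
  have hAM : A * M = D := by
    rw [hA, Matrix.mul_assoc, Matrix.nonsing_inv_mul M hM, Matrix.mul_one]
  have hBM : B * M = K := by
    rw [hB, Matrix.mul_assoc, Matrix.nonsing_inv_mul M hM, Matrix.mul_one]
  have hAK : A * K = B * D := by
    have hAeq : A = α • (1 : Matrix (Fin n) (Fin n) ℝ) + β • B := by
      rw [hA, hB, hD, Matrix.add_mul, Matrix.smul_mul, Matrix.smul_mul,
        Matrix.mul_nonsing_inv M hM]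
    rw [hAeq, Matrix.add_mul, Matrix.smul_mul, Matrix.smul_mul, Matrix.one_mul, hD,
      Matrix.mul_add, Matrix.mul_smul, Matrix.mul_smul, hBM]
  -- abbreviations
  set u1 := iteratedDerivWithin 1 u I with hu1
  set u2 := iteratedDerivWithin 2 u I with hu2
  set u3 := iteratedDerivWithin 3 u I with hu3
  set u4 := iteratedDerivWithin 4 u I with hu4
  set v1 := iteratedDerivWithin 1 v I with hv1
  set v2 := iteratedDerivWithin 2 v I with hv2
  set F := resF M D K g a b u with hF
  set Fd := resFdot M D K a b u with hFd
  have hFdef : ∀ s, F s = M.mulVec (u2 s) + D.mulVec (u1 s) + K.mulVec (u s) + g := fun s => rfl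
  have hFddef : ∀ s, Fd s = M.mulVec (u3 s) + D.mulVec (u2 s) + K.mulVec (u1 s) := fun s => rfl
  have hu0 : iteratedDerivWithin 0 u I = u := by funext y; simp
  have hv0 : iteratedDerivWithin 0 v I = v := by funext y; simp
  -- derivatives of iterated derivatives
  have hdu : ∀ x ∈ I, HasDerivWithinAt u (u1 x) I x := by
    intro x hx
    have h := hasDerivWithinAt_iteratedDerivWithin (k := 0) hu (by norm_num) hud hx
    rwa [hu0] at h
  have hdu1 : ∀ x ∈ I, HasDerivWithinAt u1 (u2 x) I x := fun x hx =>
    hasDerivWithinAt_iteratedDerivWithin (k := 1) hu (by norm_num) hud hx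
  have hdu2 : ∀ x ∈ I, HasDerivWithinAt u2 (u3 x) I x := fun x hx =>
    hasDerivWithinAt_iteratedDerivWithin (k := 2) hu (by norm_num) hud hx
  have hdu3 : ∀ x ∈ I, HasDerivWithinAt u3 (u4 x) I x := fun x hx =>
    hasDerivWithinAt_iteratedDerivWithin (k := 3) hu (by norm_num) hud hx
  have hdv : ∀ x ∈ I, HasDerivWithinAt v (v1 x) I x := by
    intro x hx
    have h := hasDerivWithinAt_iteratedDerivWithin (k := 0) hv (by norm_num) hud hx
    rwa [hv0] at h
  have hdv1 : ∀ x ∈ I, HasDerivWithinAt v1 (v2 x) I x := fun x hx =>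
    hasDerivWithinAt_iteratedDerivWithin (k := 1) hv (by norm_num) hud hx
  -- derivative of F and Fd
  have hdF : ∀ x ∈ I, HasDerivWithinAt F (Fd x) I x := by
    intro x hx
    have h := (((hasDerivWithinAt_mulVec M (hdu2 x hx)).add
        (hasDerivWithinAt_mulVec D (hdu1 x hx))).add
        (hasDerivWithinAt_mulVec K (hdu x hx))).add_const g
    exact h
  have hdFd : ∀ x ∈ I,
      HasDerivWithinAt Fd (M.mulVec (u4 x) + D.mulVec (u3 x) + K.mulVec (u2 x)) I x := by
    intro x hx
    exact ((hasDerivWithinAt_mulVec M (hdu3 x hx)).add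
        (hasDerivWithinAt_mulVec D (hdu2 x hx))).add
        (hasDerivWithinAt_mulVec K (hdu1 x hx))
  -- the boundary function and its derivative
  have hφd : ∀ x ∈ I, HasDerivWithinAt
      (fun s => v1 s ⬝ᵥ F s + v s ⬝ᵥ A.mulVec (F s) - v s ⬝ᵥ Fd s)
      ((v2 x ⬝ᵥ F x + v1 x ⬝ᵥ A.mulVec (F x) + v x ⬝ᵥ B.mulVec (F x))
        - (v x ⬝ᵥ (M.mulVec (u4 x) + ((2:ℝ) • K - A * D).mulVec (u2 x)
            + B.mulVec (K.mulVec (u x) + g)))) I x := by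
    intro x hx
    have h := ((hasDerivWithinAt_dotProduct (hdv1 x hx) (hdF x hx)).add
      (hasDerivWithinAt_dotProduct (hdv x hx) (hasDerivWithinAt_mulVec A (hdF x hx)))).sub
      (hasDerivWithinAt_dotProduct (hdv x hx) (hdFd x hx))
    refine h.congr_deriv ?_
    -- real-number identity, from the vector identity
    have hvec : (M.mulVec (u4 x) + D.mulVec (u3 x) + K.mulVec (u2 x)) + B.mulVec (F x)
        = (M.mulVec (u4 x) + ((2:ℝ) • K - A * D).mulVec (u2 x)
            + B.mulVec (K.mulVec (u x) + g)) + A.mulVec (Fd x) := by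
      rw [hFdef, hFddef]
      simp only [Matrix.mulVec_add, Matrix.sub_mulVec, Matrix.add_mulVec,
        Matrix.smul_mulVec, Matrix.mulVec_mulVec, hAM, hBM, hAK]
      module
    have hdot := congrArg (fun w => v x ⬝ᵥ w) hvec
    simp only [dotProduct_add] at hdot ⊢
    linarith [hdot]
  -- continuity
  have hcu : ∀ k : ℕ, k ≤ 4 → ContinuousOn (iteratedDerivWithin k u I) I := fun k hk =>
    hu.continuousOn_iteratedDerivWithin (by exact_mod_cast hk) hud
  have hcv : ∀ k : ℕ, k ≤ 2 → ContinuousOn (iteratedDerivWithin k v I) I := fun k hk =>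
    hv.continuousOn_iteratedDerivWithin (by exact_mod_cast hk) hud
  have hcu0 : ContinuousOn u I := by have := hcu 0 (by norm_num); rwa [hu0] at this
  have hcv0 : ContinuousOn v I := by have := hcv 0 (by norm_num); rwa [hv0] at this
  have hcu1 : ContinuousOn u1 I := hcu 1 (by norm_num)
  have hcu2 : ContinuousOn u2 I := hcu 2 (by norm_num)
  have hcu3 : ContinuousOn u3 I := hcu 3 (by norm_num)
  have hcu4 : ContinuousOn u4 I := hcu 4 (by norm_num)
  have hcv1 : ContinuousOn v1 I := hcv 1 (by norm_num)
  have hcv2 : ContinuousOn v2 I := hcv 2 (by norm_num)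
  have hcF : ContinuousOn F I := by
    have : ContinuousOn (fun s => M.mulVec (u2 s) + D.mulVec (u1 s) + K.mulVec (u s) + g) I :=
      (((continuousOn_mulVec' M hcu2).add (continuousOn_mulVec' D hcu1)).add
        (continuousOn_mulVec' K hcu0)).add continuousOn_const
    exact this
  have hcFd : ContinuousOn Fd I := by
    have : ContinuousOn (fun s => M.mulVec (u3 s) + D.mulVec (u2 s) + K.mulVec (u1 s)) I :=
      ((continuousOn_mulVec' M hcu3).add (continuousOn_mulVec' D hcu2)).add
        (continuousOn_mulVec' K hcu1)
    exact this
  have hcφ : ContinuousOn (fun s => v1 s ⬝ᵥ F s + v s ⬝ᵥ A.mulVec (F s) - v s ⬝ᵥ Fd s) I :=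
    ((continuousOn_dotProduct' hcv1 hcF).add
      (continuousOn_dotProduct' hcv0 (continuousOn_mulVec' A hcF))).sub
      (continuousOn_dotProduct' hcv0 hcFd)
  have hcL : ContinuousOn
      (fun s => v2 s ⬝ᵥ F s + v1 s ⬝ᵥ A.mulVec (F s) + v s ⬝ᵥ B.mulVec (F s)) I :=
    ((continuousOn_dotProduct' hcv2 hcF).add
      (continuousOn_dotProduct' hcv1 (continuousOn_mulVec' A hcF))).add
      (continuousOn_dotProduct' hcv0 (continuousOn_mulVec' B hcF))
  have hcR : ContinuousOn
      (fun s => v s ⬝ᵥ (M.mulVec (u4 s) + ((2:ℝ) • K - A * D).mulVec (u2 s)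
        + B.mulVec (K.mulVec (u s) + g))) I :=
    continuousOn_dotProduct' hcv0
      (((continuousOn_mulVec' M hcu4).add (continuousOn_mulVec' ((2:ℝ) • K - A * D) hcu2)).add
        (continuousOn_mulVec' B ((continuousOn_mulVec' K hcu0).add continuousOn_const)))
  -- integrability
  have hIcc : uIcc a b = I := uIcc_of_le hab'
  have hLint : IntervalIntegrable
      (fun s => v2 s ⬝ᵥ F s + v1 s ⬝ᵥ A.mulVec (F s) + v s ⬝ᵥ B.mulVec (F s))
      MeasureTheory.volume a b := (hIcc ▸ hcL).intervalIntegrable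
  have hRint : IntervalIntegrable
      (fun s => v s ⬝ᵥ (M.mulVec (u4 s) + ((2:ℝ) • K - A * D).mulVec (u2 s)
        + B.mulVec (K.mulVec (u s) + g))) MeasureTheory.volume a b :=
    (hIcc ▸ hcR).intervalIntegrable
  -- FTC
  have hFTC : (∫ s in a..b,
        ((v2 s ⬝ᵥ F s + v1 s ⬝ᵥ A.mulVec (F s) + v s ⬝ᵥ B.mulVec (F s))
          - v s ⬝ᵥ (M.mulVec (u4 s) + ((2:ℝ) • K - A * D).mulVec (u2 s)
            + B.mulVec (K.mulVec (u s) + g))))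
      = (v1 b ⬝ᵥ F b + v b ⬝ᵥ A.mulVec (F b) - v b ⬝ᵥ Fd b)
        - (v1 a ⬝ᵥ F a + v a ⬝ᵥ A.mulVec (F a) - v a ⬝ᵥ Fd a) := by
    apply intervalIntegral.integral_eq_sub_of_hasDeriv_right_of_le hab' hcφ
    · intro x hx
      exact ((hφd x (Ioo_subset_Icc_self hx)).hasDerivAt
        (Icc_mem_nhds hx.1 hx.2)).hasDerivWithinAt
    · exact hLint.sub hRint
  rw [intervalIntegral.integral_sub hLint hRint] at hFTC
  linarith [hFTC]
end
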